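/- arXiv:2301.05151 — 2 statements merged into one kernel-verified Lean document; each statement's English description precedes it below -/
import Mathlib

section
/- Let P be a finite partially ordered set with greatest element ⊤. Let S be the set of pairs (σ, m) where σ = (⊤ = L_0 > L_1 > ... > L_n) is a strictly decreasing chain in P and m ∈ P satisfies m ≤ L_n and m ≠ ⊤. Define Δ(σ, m) = (σ + m, m) if L_n > m (where σ + m is obtained by appending m to σ), and Δ(σ, m) = (σ − m, m) if L_n = m (where σ − m is obtained by deleting the last term). Then Δ is a well-defined involution of S, and for every (σ, m) ∈ S the lengths of σ and of the chain component of Δ(σ, m) differ by exactly 1. In particular Δ restricts to a bijection between the pairs whose chain has even length and those whose chain has odd length. -/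
open scoped Classical

/-- Pairs `(σ, m)` where `σ` is a strictly decreasing chain in `P` starting at `⊤`
(encoded as the finset of its terms, which contains `⊤` and is totally ordered) and
`m ∈ P` satisfies `m ≤ L_n` (the last, i.e. smallest, term of `σ`) and `m ≠ ⊤`. -/
def chainPairs (P : Type) [PartialOrder P] [OrderTop P] : Set (Finset P × P) :=
  {s | ⊤ ∈ s.1 ∧ IsChain (· ≤ ·) (↑s.1 : Set P) ∧ (∀ x ∈ s.1, s.2 ≤ x) ∧ s.2 ≠ ⊤}


/-- The map `Δ(σ, m) = (σ + m, m)` if `L_n > m` (append `m`), `Δ(σ, m) = (σ − m, m)` if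
`L_n = m` (delete the last term), is a well-defined involution of the set of pairs
`(σ, m)`, it changes the length of the chain by exactly `1`, and hence restricts to a
bijection between the pairs whose chain has even length and those whose chain has odd
length. (The chain `σ = (⊤ = L_0 > ... > L_n)` is encoded as the finset of its terms,
of cardinality `n + 1`, so its length is `card − 1`; `L_n > m` iff `m ∉ σ` and
`L_n = m` iff `m ∈ σ`.) -/
theorem chain_involution (P : Type) [PartialOrder P] [OrderTop P] [Fintype P] :
    ∃ Δ : Finset P × P → Finset P × P,
      (∀ s ∈ chainPairs P, Δ s ∈ chainPairs P) ∧
      (∀ s ∈ chainPairs P, Δ (Δ s) = s) ∧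
      (∀ s ∈ chainPairs P,
        Δ s = if s.2 ∈ s.1 then (s.1.erase s.2, s.2) else (insert s.2 s.1, s.2)) ∧
      (∀ s ∈ chainPairs P, (Δ s).1.card = s.1.card + 1 ∨ s.1.card = (Δ s).1.card + 1) ∧
      Set.BijOn Δ {s ∈ chainPairs P | Even (s.1.card - 1)}
        {s ∈ chainPairs P | ¬ Even (s.1.card - 1)} := by
  classical
  refine ⟨fun s => if s.2 ∈ s.1 then (s.1.erase s.2, s.2) else (insert s.2 s.1, s.2),
    ?_, ?_, ?_, ?_, ?_⟩ <;>
    [skip; skip; skip; skip; skip]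
  case _ =>
    rintro ⟨σ, m⟩ ⟨htop, hchain, hle, hne⟩
    by_cases hm : m ∈ σ
    · simp only [hm, if_pos]
      refine ⟨Finset.mem_erase.2 ⟨Ne.symm hne, htop⟩, hchain.mono ?_,
        fun x hx => hle x (Finset.mem_of_mem_erase hx), hne⟩
      intro x hx
      exact Finset.mem_coe.2 (Finset.mem_of_mem_erase (Finset.mem_coe.1 hx))
    · simp only [hm, if_neg, not_false_iff]
      refine ⟨Finset.mem_insert_of_mem htop, ?_, ?_, hne⟩
      · intro x hx y hy hxy
        simp only [Finset.coe_insert, Set.mem_insert_iff, Finset.mem_coe] at hx hy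
        rcases hx with rfl | hx
        · rcases hy with rfl | hy
          · exact absurd rfl hxy
          · exact Or.inl (hle y hy)
        · rcases hy with rfl | hy
          · exact Or.inr (hle x hx)
          · exact hchain hx hy hxy
      · intro x hx
        rcases Finset.mem_insert.1 hx with rfl | hx
        · exact le_rfl
        · exact hle x hx
  case _ =>
    rintro ⟨σ, m⟩ ⟨htop, hchain, hle, hne⟩
    by_cases hm : m ∈ σ
    · have h2 : m ∉ σ.erase m := Finset.notMem_erase m σ
      simp [hm, h2, Finset.insert_erase hm]
    · have h2 : m ∈ insert m σ := Finset.mem_insert_self m σ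
      simp [hm, h2, Finset.erase_insert hm]
  case _ =>
    intro s _; rfl
  case _ =>
    rintro ⟨σ, m⟩ ⟨htop, hchain, hle, hne⟩
    by_cases hm : m ∈ σ
    · right
      simp only [hm, if_pos]
      exact (Finset.card_erase_add_one hm).symm
    · left
      simp only [hm, if_neg, not_false_iff]
      exact Finset.card_insert_of_notMem hm
  case _ =>
    set Δ : Finset P × P → Finset P × P := fun s =>
      if s.2 ∈ s.1 then (s.1.erase s.2, s.2) else (insert s.2 s.1, s.2) with hΔ
    have hmem : ∀ s ∈ chainPairs P, Δ s ∈ chainPairs P := by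
      rintro ⟨σ, m⟩ ⟨htop, hchain, hle, hne⟩
      by_cases hm : m ∈ σ
      · simp only [hΔ, hm, if_pos]
        refine ⟨Finset.mem_erase.2 ⟨Ne.symm hne, htop⟩, hchain.mono ?_,
          fun x hx => hle x (Finset.mem_of_mem_erase hx), hne⟩
        intro x hx
        exact Finset.mem_coe.2 (Finset.mem_of_mem_erase (Finset.mem_coe.1 hx))
      · simp only [hΔ, hm, if_neg, not_false_iff]
        refine ⟨Finset.mem_insert_of_mem htop, ?_, ?_, hne⟩
        · intro x hx y hy hxy
          simp only [Finset.coe_insert, Set.mem_insert_iff, Finset.mem_coe] at hx hy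
          rcases hx with rfl | hx
          · rcases hy with rfl | hy
            · exact absurd rfl hxy
            · exact Or.inl (hle y hy)
          · rcases hy with rfl | hy
            · exact Or.inr (hle x hx)
            · exact hchain hx hy hxy
        · intro x hx
          rcases Finset.mem_insert.1 hx with rfl | hx
          · exact le_rfl
          · exact hle x hx
    have hinv : ∀ s ∈ chainPairs P, Δ (Δ s) = s := by
      rintro ⟨σ, m⟩ ⟨htop, hchain, hle, hne⟩
      by_cases hm : m ∈ σ
      · have h2 : m ∉ σ.erase m := Finset.notMem_erase m σ
        simp [hΔ, hm, h2, Finset.insert_erase hm]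
      · have h2 : m ∈ insert m σ := Finset.mem_insert_self m σ
        simp [hΔ, hm, h2, Finset.erase_insert hm]
    have hcard : ∀ s ∈ chainPairs P,
        (Δ s).1.card = s.1.card + 1 ∨ s.1.card = (Δ s).1.card + 1 := by
      rintro ⟨σ, m⟩ ⟨htop, hchain, hle, hne⟩
      by_cases hm : m ∈ σ
      · right
        simp only [hΔ, hm, if_pos]
        exact (Finset.card_erase_add_one hm).symm
      · left
        simp only [hΔ, hm, if_neg, not_false_iff]
        exact Finset.card_insert_of_notMem hm
    have hpos : ∀ s ∈ chainPairs P, 1 ≤ s.1.card := by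
      rintro ⟨σ, m⟩ ⟨htop, _, _, _⟩
      exact Finset.card_pos.2 ⟨⊤, htop⟩
    have hparity : ∀ s ∈ chainPairs P, Even (s.1.card - 1) →
        ¬ Even ((Δ s).1.card - 1) := by
      intro s hs he
      have h1 := hpos s hs
      have h2 := hpos _ (hmem s hs)
      have h3 := hcard s hs
      simp only [Nat.even_iff] at he ⊢
      omega
    have hparity' : ∀ s ∈ chainPairs P, ¬ Even (s.1.card - 1) →
        Even ((Δ s).1.card - 1) := by
      intro s hs he
      have h1 := hpos s hs
      have h2 := hpos _ (hmem s hs)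
      have h3 := hcard s hs
      simp only [Nat.even_iff] at he ⊢
      omega
    refine ⟨?_, ?_, ?_⟩
    · rintro s ⟨hs, he⟩
      exact ⟨hmem s hs, hparity s hs he⟩
    · rintro a ⟨ha, _⟩ b ⟨hb, _⟩ hab
      calc a = Δ (Δ a) := (hinv a ha).symm
        _ = Δ (Δ b) := by rw [hab]
        _ = b := hinv b hb
    · rintro t ⟨ht, hto⟩
      exact ⟨Δ t, ⟨hmem t ht, hparity' t ht hto⟩, hinv t ht⟩
end

section
/- Let G̃ be a finite group with subgroups N ⊴ G ⊴ G̃ and Ñ ⊴ G̃ such that N = Ñ ∩ G, G̃ = GÑ, N ≤ Ñ, and the natural map Ñ/N → G̃/G is an isomorphism of abelian groups. Let θ ∈ Irr(N) be G̃-invariant with a fixed extension θ̃ ∈ Irr(Ñ). Suppose ψ ∈ Irr(G) lies above θ and admits some extension ψ̃_0 ∈ Irr(G̃). Then ψ admits an extension ψ̃ ∈ Irr(G̃) lying above θ̃. -/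
open scoped Classical

noncomputable section

/-- `χ` is an irreducible (complex) character of the group `G`. -/
def IsIrrChar (G : Type) [Group G] (χ : G → ℂ) : Prop :=
  ∃ V : FDRep ℂ G, CategoryTheory.Simple V ∧ FDRep.character V = χ

/-- The usual inner product of class functions on a finite group. -/
noncomputable def charInner (G : Type) [Group G] [Fintype G] (φ ψ : G → ℂ) : ℂ :=
  (Nat.card G : ℂ)⁻¹ * ∑ g : G, φ g * (starRingEnd ℂ) (ψ g)

/-- The conjugate `θ^g` of a character `θ` of a normal subgroup `N`, given by
`θ^g(n) = θ(g n g⁻¹)`. -/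
def conjChar {G : Type} [Group G] (N : Subgroup G) (hN : N.Normal) (g : G)
    (θ : N → ℂ) : N → ℂ :=
  fun n => θ ⟨g * ↑n * g⁻¹, hN.conj_mem ↑n n.2 g⟩

namespace TwistAux

open CategoryTheory

variable {Gt : Type} [Group Gt]

/-- Twist a representation by a linear character. -/
def twistRep (α : Gt →* ℂˣ) {M : Type} [AddCommGroup M] [Module ℂ M]
    (ρ : Representation ℂ Gt M) : Representation ℂ Gt M where
  toFun g := (α g : ℂ) • ρ g
  map_one' := by simp
  map_mul' g h := by
    ext v
    simp [smul_smul, mul_comm, mul_left_comm, mul_assoc, Module.End.mul_apply]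

/-- Twist an `FDRep` by a linear character, keeping the same underlying space. -/
def twist (α : Gt →* ℂˣ) (X : FDRep ℂ Gt) : FDRep ℂ Gt :=
  ⟨X.V, (InducedCategory.endEquiv.symm.toMonoidHom).comp
    ((ModuleCat.endRingEquiv X.V.obj).symm.toMonoidHom.comp (twistRep α X.ρ))⟩

lemma twist_character (α : Gt →* ℂˣ) (X : FDRep ℂ Gt) (g : Gt) :
    (twist α X).character g = (α g : ℂ) * X.character g := by
  show LinearMap.trace ℂ _ ((α g : ℂ) • X.ρ g) = _
  rw [map_smul, smul_eq_mul]; rfl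

/-- The twisting functor. -/
def twistF (α : Gt →* ℂˣ) : FDRep ℂ Gt ⥤ FDRep ℂ Gt where
  obj X := twist α X
  map {X Y} f :=
    { hom := f.hom
      comm := fun g => by
        have h := f.comm g
        ext v
        have h' := congrArg (fun t => t.hom.hom v) h
        change f.hom.hom.hom ((α g : ℂ) • X.ρ g v) = (α g : ℂ) • Y.ρ g (f.hom.hom.hom v)
        rw [map_smul]
        exact congrArg (fun t => (α g : ℂ) • t) h' }
  map_id X := rfl
  map_comp f g := rfl

instance (α : Gt →* ℂˣ) : (twistF α).Additive where
  map_add := rfl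

lemma twist_twist (α : Gt →* ℂˣ) (X : FDRep ℂ Gt) (g : Gt) :
    (twist α⁻¹ (twist α X)).ρ g = X.ρ g := by
  show ((α⁻¹ g : ℂˣ) : ℂ) • (((α g : ℂˣ) : ℂ) • X.ρ g) = X.ρ g
  rw [smul_smul, ← Units.val_mul, MonoidHom.inv_apply, inv_mul_cancel]
  simp

lemma twist_twist_action (α : Gt →* ℂˣ) (X : FDRep ℂ Gt) (g : Gt) :
    Action.ρ (twist α⁻¹ (twist α X)) g = Action.ρ X g := by
  show InducedCategory.endEquiv.symm ((ModuleCat.endRingEquiv _).symm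
    ((twist α⁻¹ (twist α X)).ρ g)) = _
  rw [twist_twist]; rfl

lemma twist_twist_action' (α : Gt →* ℂˣ) (X : FDRep ℂ Gt) (g : Gt) :
    Action.ρ (twist α (twist α⁻¹ X)) g = Action.ρ X g := by
  have h : (twist α (twist α⁻¹ X)).ρ g = X.ρ g := by
    show ((α g : ℂˣ) : ℂ) • (((α⁻¹ g : ℂˣ) : ℂ) • X.ρ g) = X.ρ g
    rw [smul_smul, ← Units.val_mul, MonoidHom.inv_apply, mul_inv_cancel]
    simp
  show InducedCategory.endEquiv.symm ((ModuleCat.endRingEquiv _).symm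
    ((twist α (twist α⁻¹ X)).ρ g)) = _
  rw [h]; rfl

/-- Twisting is an equivalence of categories. -/
def twistEquiv (α : Gt →* ℂˣ) : FDRep ℂ Gt ≌ FDRep ℂ Gt where
  functor := twistF α
  inverse := twistF α⁻¹
  unitIso := NatIso.ofComponents
    (fun X => Action.mkIso (Iso.refl _)
      (fun g => by
        show Action.ρ X g ≫ 𝟙 _ = 𝟙 _ ≫ _
        exact (Category.comp_id _).trans
          ((twist_twist_action α X g).symm.trans (Category.id_comp _).symm)))
    (fun f => by ext; rfl)
  counitIso := NatIso.ofComponents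
    (fun X => Action.mkIso (Iso.refl _)
      (fun g => by
        show _ ≫ 𝟙 _ = 𝟙 _ ≫ Action.ρ X g
        have := twist_twist_action' α X g
        exact (Category.comp_id _).trans (this.trans (Category.id_comp _).symm)))
    (fun f => by ext; rfl)
  functor_unitIso_comp X := by ext; simp [twistF]; rfl

/-- An equivalence of categories (preserving zero morphisms backwards)
sends simple objects to simple objects. -/
theorem simple_obj_of_equiv {C D : Type*} [Category C] [Category D]
    [Limits.HasZeroMorphisms C] [Limits.HasZeroMorphisms D] (E : C ≌ D)
    [E.inverse.PreservesZeroMorphisms]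
    (X : C) [Simple X] : Simple (E.functor.obj X) := by
  constructor
  intro Y f hf
  haveI : E.inverse.PreservesMonomorphisms :=
    Functor.preservesMonomorphisms_of_adjunction E.toAdjunction
  set i : E.inverse.obj (E.functor.obj X) ≅ X := (E.unitIso.app X).symm with hi
  set g : E.inverse.obj Y ⟶ X := E.inverse.map f ≫ i.hom with hg
  haveI : Mono (E.inverse.map f) := E.inverse.map_mono f
  haveI : Mono g := mono_comp _ _
  have h1 : IsIso f ↔ IsIso g := by
    constructor
    · intro h; exact inferInstance
    · intro h
      have : IsIso (E.inverse.map f) := by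
        have : E.inverse.map f = g ≫ i.inv := by simp [hg]
        rw [this]; infer_instance
      exact isIso_of_reflects_iso f E.inverse
  have h2 : f = 0 ↔ g = 0 := by
    constructor
    · intro h; simp [hg, h]
    · intro h
      have : E.inverse.map f = 0 := by
        have : E.inverse.map f = g ≫ i.inv := by simp [hg]
        rw [this, h, Limits.zero_comp]
      apply E.inverse.map_injective
      rw [this, Functor.map_zero]
  rw [h1, Ne, h2]
  exact Simple.mono_isIso_iff_nonzero g

/-- Twisting an irreducible character by a linear character gives an
irreducible character. -/
theorem isIrrChar_twist (α : Gt →* ℂˣ) (χ : Gt → ℂ) (h : IsIrrChar Gt χ) :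
    IsIrrChar Gt (fun x => (α x : ℂ) * χ x) := by
  obtain ⟨V, hV, hVchar⟩ := h
  haveI := hV
  haveI : (twistEquiv α).inverse.PreservesZeroMorphisms :=
    inferInstanceAs ((twistF α⁻¹).PreservesZeroMorphisms)
  refine ⟨twist α V, simple_obj_of_equiv (twistEquiv α) V, ?_⟩
  funext x
  rw [twist_character, hVchar]

end TwistAux

/-- The twisting construction: with `N ⊴ G ⊴ Gt`, `Nt ⊴ Gt`, `N = Nt ⊓ G`, `Gt = G·Nt`
and `Nt/N ≅ Gt/G` abelian, let `θ ∈ Irr(N)` be `Gt`-invariant with a fixed extension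
`θt ∈ Irr(Nt)`.  If `ψ ∈ Irr(G)` lies above `θ` and extends to `Gt`, then `ψ` has an
extension to `Gt` lying above `θt`. -/
theorem extension_above_fixed_extension (Gt : Type) [Group Gt] [Fintype Gt]
    (N G Nt : Subgroup Gt) (hN : N.Normal) (hG : G.Normal) (hNt : Nt.Normal)
    (hNG : N ≤ G) (hNNt : N ≤ Nt)
    (hcap : Nt ⊓ G = N)
    (hprod : ∀ x : Gt, ∃ g ∈ G, ∃ m ∈ Nt, x = g * m)
    (habelian : ∀ x y : Gt, x * y * x⁻¹ * y⁻¹ ∈ G)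
    (θ : N → ℂ) (hθ : IsIrrChar N θ)
    (hθinv : ∀ g : Gt, conjChar N hN g θ = θ)
    (θt : Nt → ℂ) (hθt : IsIrrChar Nt θt)
    (hθtres : ∀ n : N, θt ⟨↑n, hNNt n.2⟩ = θ n)
    (ψ : G → ℂ) (hψ : IsIrrChar G ψ)
    (hψθ : charInner N (fun n : N => ψ ⟨↑n, hNG n.2⟩) θ ≠ 0)
    (ψt₀ : Gt → ℂ) (hψt₀ : IsIrrChar Gt ψt₀)
    (hψt₀res : ∀ g : G, ψt₀ ↑g = ψ g) :
    ∃ ψt : Gt → ℂ, IsIrrChar Gt ψt ∧ (∀ g : G, ψt ↑g = ψ g) ∧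
      charInner Nt (fun m : Nt => ψt ↑m) θt ≠ 0 := by
  classical
  -- the abelian quotient `Gt ⧸ G`
  letI commA : CommGroup (Gt ⧸ G) :=
    { (inferInstance : Group (Gt ⧸ G)) with
      mul_comm := by
        intro a b
        induction a using QuotientGroup.induction_on with
        | H x =>
        induction b using QuotientGroup.induction_on with
        | H y =>
        rw [← QuotientGroup.mk_mul, ← QuotientGroup.mk_mul, QuotientGroup.eq]
        have h := habelian y⁻¹ x⁻¹
        rw [inv_inv, inv_inv] at h
        have heq : (x * y)⁻¹ * (y * x) = y⁻¹ * x⁻¹ * y * x := by group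
        rw [heq]
        exact h }
  haveI : Finite (Gt ⧸ G) := Quotient.finite _
  haveI : NeZero ((Monoid.exponent (Gt ⧸ G) : ℂ)) :=
    ⟨Nat.cast_ne_zero.mpr (Monoid.exponent_ne_zero_of_finite (G := Gt ⧸ G))⟩
  haveI : HasEnoughRootsOfUnity ℂ (Monoid.exponent (Gt ⧸ G)) := inferInstance
  obtain ⟨e⟩ := CommGroup.monoidHom_mulEquiv_of_hasEnoughRootsOfUnity (Gt ⧸ G) ℂ
  haveI : Finite ((Gt ⧸ G) →* ℂˣ) := Finite.of_equiv _ e.toEquiv.symm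
  letI : Fintype ((Gt ⧸ G) →* ℂˣ) := Fintype.ofFinite _
  haveI : Nonempty ((Gt ⧸ G) →* ℂˣ) := ⟨1⟩
  -- orthogonality sums for characters of the quotient
  have hsum0 : ∀ x : Gt, x ∉ G →
      ∑ χ : (Gt ⧸ G) →* ℂˣ, ((χ (x : Gt ⧸ G) : ℂˣ) : ℂ) = 0 := by
    intro x hx
    have hx1 : (x : Gt ⧸ G) ≠ 1 := by
      simpa [QuotientGroup.eq_one_iff] using hx
    obtain ⟨χ₀, hχ₀⟩ :=
      CommGroup.exists_apply_ne_one_of_hasEnoughRootsOfUnity (Gt ⧸ G) ℂ hx1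
    have hre : ∑ χ : (Gt ⧸ G) →* ℂˣ, (((χ₀ * χ) (x : Gt ⧸ G) : ℂˣ) : ℂ)
        = ∑ χ : (Gt ⧸ G) →* ℂˣ, ((χ (x : Gt ⧸ G) : ℂˣ) : ℂ) :=
      Fintype.sum_bijective (fun χ => χ₀ * χ) (Group.mulLeft_bijective χ₀) _ _
        (fun χ => rfl)
    have hfac : (((χ₀ (x : Gt ⧸ G) : ℂˣ) : ℂ) - 1) *
        ∑ χ : (Gt ⧸ G) →* ℂˣ, ((χ (x : Gt ⧸ G) : ℂˣ) : ℂ) = 0 := by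
      rw [sub_mul, one_mul, Finset.mul_sum, sub_eq_zero, ← hre]
      refine Finset.sum_congr rfl fun χ _ => ?_
      simp [Units.val_mul]
    rcases mul_eq_zero.mp hfac with h | h
    · exact absurd (Units.val_eq_one.mp (sub_eq_zero.mp h)) hχ₀
    · exact h
  have hsum1 : ∀ x : Gt, x ∈ G →
      ∑ χ : (Gt ⧸ G) →* ℂˣ, ((χ (x : Gt ⧸ G) : ℂˣ) : ℂ)
        = (Fintype.card ((Gt ⧸ G) →* ℂˣ) : ℂ) := by
    intro x hx
    have h1 : (x : Gt ⧸ G) = 1 := (QuotientGroup.eq_one_iff x).mpr hx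
    simp [h1, Finset.card_univ]
  -- the function summed over `Nt`
  set T : Nt → ℂ := fun m =>
    (∑ χ : (Gt ⧸ G) →* ℂˣ, ((χ ((m : Gt) : Gt ⧸ G) : ℂˣ) : ℂ)) *
      (ψt₀ ↑m * (starRingEnd ℂ) (θt m)) with hT
  have hTval : ∀ m : Nt, T m =
      if h : (↑m : Gt) ∈ N then
        (Fintype.card ((Gt ⧸ G) →* ℂˣ) : ℂ) *
          (ψ ⟨↑m, hNG h⟩ * (starRingEnd ℂ) (θ ⟨↑m, h⟩))
      else 0 := by
    intro m
    by_cases h : (↑m : Gt) ∈ N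
    · rw [dif_pos h, hT]
      dsimp only
      have hG' : (↑m : Gt) ∈ G := hNG h
      have e1 : ψt₀ ↑m = ψ ⟨↑m, hG'⟩ := hψt₀res ⟨↑m, hG'⟩
      have e2 : θt m = θ ⟨↑m, h⟩ := hθtres ⟨↑m, h⟩
      rw [hsum1 _ hG', e1, e2]
    · rw [dif_neg h, hT]
      dsimp only
      have hG' : (↑m : Gt) ∉ G := by
        intro hc
        exact h (by rw [← hcap]; exact ⟨m.2, hc⟩)
      rw [hsum0 _ hG', zero_mul]
  -- sum of `T` over `Nt` reduces to a sum over `N`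
  have ι_inj : Function.Injective (fun n : N => (⟨↑n, hNNt n.2⟩ : Nt)) := by
    intro a b hab
    have h2 : ((⟨↑a, hNNt a.2⟩ : Nt) : Gt) = ((⟨↑b, hNNt b.2⟩ : Nt) : Gt) :=
      congrArg Subtype.val hab
    exact Subtype.ext h2
  have hTsum : ∑ m : Nt, T m =
      (Fintype.card ((Gt ⧸ G) →* ℂˣ) : ℂ) *
        ∑ n : N, ψ ⟨↑n, hNG n.2⟩ * (starRingEnd ℂ) (θ n) := by
    have step1 : ∑ m : Nt, T m
        = ∑ m ∈ Finset.univ.map ⟨fun n : N => (⟨↑n, hNNt n.2⟩ : Nt), ι_inj⟩, T m := by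
      symm
      apply Finset.sum_subset (Finset.subset_univ _)
      intro m _ hm
      rw [hTval m, dif_neg]
      intro h
      apply hm
      rw [Finset.mem_map]
      exact ⟨⟨↑m, h⟩, Finset.mem_univ _, rfl⟩
    rw [step1, Finset.sum_map, Finset.mul_sum]
    refine Finset.sum_congr rfl fun n _ => ?_
    show T ⟨↑n, hNNt n.2⟩ = _
    rw [hTval ⟨↑n, hNNt n.2⟩, dif_pos n.2]
  -- the key identity
  have key : ∑ χ : (Gt ⧸ G) →* ℂˣ,
      charInner Nt (fun m : Nt => ((χ ((m : Gt) : Gt ⧸ G) : ℂˣ) : ℂ) * ψt₀ ↑m) θt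
      = (Nat.card Nt : ℂ)⁻¹ * ∑ m : Nt, T m := by
    unfold charInner
    rw [← Finset.mul_sum]
    congr 1
    rw [Finset.sum_comm]
    refine Finset.sum_congr rfl fun m _ => ?_
    rw [hT]
    dsimp only
    rw [Finset.sum_mul]
    refine Finset.sum_congr rfl fun χ _ => ?_
    ring
  have hne : ∑ χ : (Gt ⧸ G) →* ℂˣ,
      charInner Nt (fun m : Nt => ((χ ((m : Gt) : Gt ⧸ G) : ℂˣ) : ℂ) * ψt₀ ↑m) θt ≠ 0 := by
    rw [key, hTsum]
    have hS : ∑ n : N, ψ ⟨↑n, hNG n.2⟩ * (starRingEnd ℂ) (θ n) ≠ 0 := by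
      intro h0
      apply hψθ
      unfold charInner
      rw [h0, mul_zero]
    refine mul_ne_zero (inv_ne_zero ?_) (mul_ne_zero ?_ hS)
    · exact_mod_cast Nat.card_pos.ne'
    · exact_mod_cast Fintype.card_ne_zero
  obtain ⟨χ, -, hχ⟩ := Finset.exists_ne_zero_of_sum_ne_zero hne
  refine ⟨fun x => ((χ (x : Gt ⧸ G) : ℂˣ) : ℂ) * ψt₀ x, ?_, ?_, ?_⟩
  · exact TwistAux.isIrrChar_twist (χ.comp (QuotientGroup.mk' G)) ψt₀ hψt₀
  · intro g
    have h1 : ((g : Gt) : Gt ⧸ G) = 1 := (QuotientGroup.eq_one_iff _).mpr g.2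
    show ((χ ((g : Gt) : Gt ⧸ G) : ℂˣ) : ℂ) * ψt₀ ↑g = ψ g
    rw [h1]
    simp [hψt₀res g]
  · exact hχ
end
end
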